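/- arXiv:2605.20115 — 2 statements merged into one kernel-verified Lean document; each statement's English description precedes it below -/
import Mathlib

section
/- Discrete Caccioppoli inequality on ℤ^d: if u : ℤ^d → ℝ and f : ℤ^d → ℝ^d satisfy −∇*·A∇u = ∇*·f with A(x) diagonal with positive entries a_e on edges, then for any ball B_r and any constant c ∈ ℝ, the averaged Dirichlet energy satisfies ⨍_{e∈𝓑_r} a_e |∇_e u|² ≲ r^{-2} ⨍_{e∈𝓑_{2r}} a_e (u - c)_e² + ⨍_{e∈𝓑_{2r}} a_e^{-1} f_e², with an implicit constant depending only on d. -/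
/-- Euclidean norm of a lattice point of `ℤ^d`. -/
noncomputable def latNorm {d : ℕ} (v : Fin d → ℤ) : ℝ :=
  Real.sqrt (∑ i, ((v i : ℝ)) ^ 2)

/-- An (oriented) edge of `ℤ^d` is a pair of a base point and a direction. -/
abbrev Edge (d : ℕ) := (Fin d → ℤ) × Fin d

/-- The second endpoint of an edge. -/
def Edge.head {d : ℕ} (e : Edge d) : Fin d → ℤ := e.1 + Pi.single e.2 1

/-- Edge difference (discrete gradient along the edge). -/
noncomputable def edgeGrad {d : ℕ} (u : (Fin d → ℤ) → ℝ) (e : Edge d) : ℝ :=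
  u e.head - u e.1

/-- Edge average of a vertex function. -/
noncomputable def edgeAvg {d : ℕ} (u : (Fin d → ℤ) → ℝ) (e : Edge d) : ℝ :=
  (u e.1 + u e.head) / 2

/-- The set of edges with both endpoints in the ball of radius `ρ` centered at the origin. -/
def edgeBall (d : ℕ) (ρ : ℝ) : Set (Edge d) :=
  {e | latNorm e.1 ≤ ρ ∧ latNorm e.head ≤ ρ}

/-- Average of a function over a set of edges. -/
noncomputable def edgeSetAvg {d : ℕ} (S : Set (Edge d)) (F : Edge d → ℝ) : ℝ :=
  (S.ncard : ℝ)⁻¹ * ∑ᶠ e ∈ S, F e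

lemma latNorm_nonneg {d : ℕ} (v : Fin d → ℤ) : 0 ≤ latNorm v := Real.sqrt_nonneg _

noncomputable def toE {d : ℕ} (v : Fin d → ℤ) : EuclideanSpace ℝ (Fin d) :=
  (WithLp.equiv 2 (Fin d → ℝ)).symm (fun i => (v i : ℝ))

lemma latNorm_eq_norm {d : ℕ} (v : Fin d → ℤ) : latNorm v = ‖toE v‖ := by
  rw [EuclideanSpace.norm_eq]
  simp [latNorm, toE, sq_abs]

lemma latNorm_add_le {d : ℕ} (v w : Fin d → ℤ) :
    latNorm (v + w) ≤ latNorm v + latNorm w := by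
  have : toE (v + w) = toE v + toE w := by
    ext i; simp [toE]
  rw [latNorm_eq_norm, latNorm_eq_norm, latNorm_eq_norm, this]
  exact norm_add_le _ _

lemma latNorm_single {d : ℕ} (i : Fin d) (z : ℤ) :
    latNorm (Pi.single i z) = |(z : ℝ)| := by
  rw [latNorm]
  have : ∑ j, ((Pi.single (M := fun _ => ℤ) i z j : ℤ) : ℝ) ^ 2 = (z : ℝ) ^ 2 := by
    rw [Finset.sum_eq_single i]
    · simp
    · intro j _ hj; simp [Pi.single_apply, hj]
    · simp
  rw [this, Real.sqrt_sq_eq_abs]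

lemma latNorm_head_le {d : ℕ} (e : Edge d) : latNorm e.head ≤ latNorm e.1 + 1 := by
  have := latNorm_add_le e.1 (Pi.single e.2 1)
  rw [latNorm_single] at this
  simpa [Edge.head] using this

lemma latNorm_base_le {d : ℕ} (e : Edge d) : latNorm e.1 ≤ latNorm e.head + 1 := by
  have h1 : e.1 = e.head + Pi.single e.2 (-1) := by
    funext j; simp [Edge.head, Pi.single_apply]; split <;> ring
  have := latNorm_add_le e.head (Pi.single e.2 (-1))
  rw [latNorm_single] at this
  rw [h1]
  simpa using this

lemma abs_latNorm_sub_edge {d : ℕ} (e : Edge d) :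
    |latNorm e.head - latNorm e.1| ≤ 1 := by
  rw [abs_le]
  constructor
  · linarith [latNorm_base_le e]
  · linarith [latNorm_head_le e]

lemma coord_le_latNorm {d : ℕ} (v : Fin d → ℤ) (i : Fin d) :
    |(v i : ℝ)| ≤ latNorm v := by
  rw [latNorm, ← Real.sqrt_sq_eq_abs]
  apply Real.sqrt_le_sqrt
  exact Finset.single_le_sum (f := fun j => ((v j : ℝ))^2) (fun j _ => sq_nonneg _)
    (Finset.mem_univ i)

lemma latNorm_le_of_coords {d : ℕ} (v : Fin d → ℤ) (t : ℝ) (ht : 0 ≤ t)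
    (h : ∀ i, |(v i : ℝ)| ≤ t) : latNorm v ≤ Real.sqrt d * t := by
  rw [latNorm]
  have h1 : ∑ i, ((v i : ℝ)) ^ 2 ≤ (d : ℝ) * t ^ 2 := by
    calc ∑ i, ((v i : ℝ)) ^ 2 ≤ ∑ _i : Fin d, t ^ 2 := by
          apply Finset.sum_le_sum; intro i _
          rw [← sq_abs]; exact pow_le_pow_left₀ (abs_nonneg _) (h i) 2
      _ = (d : ℝ) * t ^ 2 := by simp [mul_comm]
  calc Real.sqrt (∑ i, ((v i : ℝ)) ^ 2) ≤ Real.sqrt ((d : ℝ) * t ^ 2) := Real.sqrt_le_sqrt h1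
    _ = Real.sqrt d * t := by
        rw [Real.sqrt_mul (Nat.cast_nonneg d), Real.sqrt_sq ht]

lemma ball_finite (d : ℕ) (ρ : ℝ) : {x : Fin d → ℤ | latNorm x ≤ ρ}.Finite := by
  apply Set.Finite.subset (Set.Finite.pi (fun i : Fin d => Set.finite_Icc (-(⌈ρ⌉)) ⌈ρ⌉))
  intro x hx
  simp only [Set.mem_pi, Set.mem_univ, Set.mem_Icc, forall_true_left]
  intro i
  have h1 : |(x i : ℝ)| ≤ ρ := le_trans (coord_le_latNorm x i) hx
  have h2 : (|x i| : ℝ) ≤ (⌈ρ⌉ : ℝ) := by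
    push_cast
    exact le_trans h1 (Int.le_ceil ρ)
  have : |x i| ≤ ⌈ρ⌉ := by exact_mod_cast h2
  rw [abs_le] at this; exact ⟨this.1, this.2⟩

lemma edgeBall_finite (d : ℕ) (ρ : ℝ) :
    {e : Edge d | latNorm e.1 ≤ ρ ∧ latNorm e.head ≤ ρ}.Finite := by
  apply Set.Finite.subset (Set.Finite.prod (ball_finite d ρ) (Set.finite_univ (α := Fin d)))
  intro e he
  exact ⟨he.1, Set.mem_univ _⟩

lemma edgeBall_fin (d : ℕ) (ρ : ℝ) : (edgeBall d ρ).Finite := edgeBall_finite d ρ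

lemma edgeBall_card_upper (d : ℕ) (ρ : ℝ) :
    (edgeBall d ρ).ncard ≤ d * (2 * ⌈ρ⌉₊ + 1) ^ d := by
  classical
  set M : ℤ := (⌈ρ⌉₊ : ℤ)
  set F : Finset (Edge d) :=
    (Fintype.piFinset fun _ : Fin d => Finset.Icc (-M) M) ×ˢ Finset.univ
  have hsub : edgeBall d ρ ⊆ ↑F := by
    intro e he
    simp only [F, Finset.coe_product, Set.mem_prod, Finset.mem_coe,
      Fintype.mem_piFinset, Finset.mem_Icc, Finset.mem_univ, and_true]
    intro i
    have h1 : |(e.1 i : ℝ)| ≤ ρ := le_trans (coord_le_latNorm e.1 i) he.1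
    have h2 : (|e.1 i| : ℝ) ≤ (M : ℝ) := by
      push_cast
      exact le_trans h1 (Nat.le_ceil ρ)
    have h3 : |e.1 i| ≤ M := by exact_mod_cast h2
    rw [abs_le] at h3; exact h3
  calc (edgeBall d ρ).ncard ≤ F.card := by
        rw [← Set.ncard_coe_finset F]
        exact Set.ncard_le_ncard hsub F.finite_toSet
    _ = d * (2 * ⌈ρ⌉₊ + 1) ^ d := by
        rw [Finset.card_product, Fintype.card_piFinset]
        simp only [Int.card_Icc, Finset.card_univ, Fintype.card_fin]
        have : (M + 1 - -M).toNat = 2 * ⌈ρ⌉₊ + 1 := by simp only [M]; omega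
        rw [this]
        simp [Finset.prod_const, mul_comm]

lemma sqrt_le_self_nat (d : ℕ) (hd : 1 ≤ d) : Real.sqrt d ≤ (d : ℝ) := by
  have h : Real.sqrt d ≤ Real.sqrt ((d:ℝ)^2) := by
    apply Real.sqrt_le_sqrt
    have : (1:ℝ) ≤ d := by exact_mod_cast hd
    nlinarith
  rwa [Real.sqrt_sq (by positivity)] at h

lemma edgeBall_card_lower (d : ℕ) (hd : 1 ≤ d) (r : ℝ) (hr : 1 ≤ r) :
    d * (max 1 ⌊r / d⌋₊) ^ d ≤ (edgeBall d r).ncard := by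
  classical
  set M : ℕ := max 1 ⌊r / d⌋₊ with hM
  set G : Finset (Edge d) :=
    (Fintype.piFinset fun _ : Fin d => Finset.Icc (0 : ℤ) ((M:ℤ) - 1)) ×ˢ Finset.univ
  have hsub : ↑G ⊆ edgeBall d r := by
    intro e he
    simp only [G, Finset.coe_product, Set.mem_prod, Finset.mem_coe,
      Fintype.mem_piFinset, Finset.mem_Icc, Finset.mem_univ, and_true] at he
    have hhead : ∀ j, 0 ≤ e.head j ∧ e.head j ≤ (M:ℤ) := by
      intro j
      have h1 := (he j).1
      have h2 := (he j).2
      have hs : Pi.single (M := fun _ => ℤ) e.2 1 j = if j = e.2 then 1 else 0 := by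
        simp [Pi.single_apply]
      constructor <;> · simp only [Edge.head, Pi.add_apply, hs]; split <;> omega
    have hbase : ∀ j, 0 ≤ e.1 j ∧ e.1 j ≤ (M:ℤ) := by
      intro j; have h1 := (he j).1; have h2 := (he j).2; omega
    have key : ∀ x : Fin d → ℤ, (∀ j, 0 ≤ x j ∧ x j ≤ (M:ℤ)) → latNorm x ≤ (d:ℝ) * M := by
      intro x hx
      have habs : ∀ j, |(x j : ℝ)| ≤ (M:ℝ) := by
        intro j
        have h1 : (0:ℝ) ≤ (x j : ℝ) := by exact_mod_cast (hx j).1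
        have h2 : (x j : ℝ) ≤ (M:ℝ) := by exact_mod_cast (hx j).2
        rw [abs_of_nonneg h1]; exact h2
      calc latNorm x ≤ Real.sqrt d * M := latNorm_le_of_coords x M (by positivity) habs
        _ ≤ (d:ℝ) * M := mul_le_mul_of_nonneg_right (sqrt_le_self_nat d hd) (by positivity)
    rcases Nat.eq_zero_or_pos ⌊r / d⌋₊ with h0 | h1
    · -- M = 1, base is 0
      have hM1 : M = 1 := by rw [hM, h0]; rfl
      have hx0 : e.1 = 0 := by
        funext j
        have h1 := (he j).1
        have h2 := (he j).2
        rw [hM1] at h2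
        simp only [Pi.zero_apply]
        omega
      have hb : latNorm e.1 = 0 := by
        rw [hx0]; simp [latNorm]
      have hh : latNorm e.head = 1 := by
        have : e.head = Pi.single e.2 1 := by
          rw [Edge.head, hx0]; funext j; simp
        rw [this, latNorm_single]; norm_num
      exact ⟨by rw [hb]; linarith, by rw [hh]; exact hr⟩
    · have hMeq : M = ⌊r / d⌋₊ := max_eq_right h1
      have hd0 : (0:ℝ) < d := by positivity
      have hfl : (⌊r / d⌋₊ : ℝ) ≤ r / d := Nat.floor_le (by positivity)
      have hdM : (d:ℝ) * M ≤ r := by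
        rw [hMeq]
        calc (d:ℝ) * (⌊r / d⌋₊ : ℝ) ≤ d * (r / d) := by nlinarith
          _ = r := by field_simp
      exact ⟨le_trans (key e.1 hbase) hdM, le_trans (key e.head hhead) hdM⟩
  have hcard : G.card = d * M ^ d := by
    rw [Finset.card_product, Fintype.card_piFinset]
    simp only [Int.card_Icc, Finset.card_univ, Fintype.card_fin]
    have h2 : ((M:ℤ) - 1 + 1 - 0).toNat = M := by omega
    rw [h2]
    simp [mul_comm]
  calc d * M ^ d = G.card := hcard.symm
    _ = (↑G : Set (Edge d)).ncard := (Set.ncard_coe_finset G).symm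
    _ ≤ (edgeBall d r).ncard := Set.ncard_le_ncard hsub (edgeBall_fin d r)

lemma edgeBall_pos (d : ℕ) (hd : 1 ≤ d) (r : ℝ) (hr : 1 ≤ r) :
    0 < (edgeBall d r).ncard := by
  have h := edgeBall_card_lower d hd r hr
  have : 0 < d * (max 1 ⌊r / d⌋₊) ^ d := by positivity
  omega

lemma edgeBall_ratio (d : ℕ) (hd : 1 ≤ d) (r : ℝ) (hr : 1 ≤ r) :
    ((edgeBall d (2 * r)).ncard : ℝ) ≤ (14 * d : ℝ) ^ d * (edgeBall d r).ncard := by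
  have hup := edgeBall_card_upper d (2 * r)
  have hlo := edgeBall_card_lower d hd r hr
  set M : ℕ := max 1 ⌊r / d⌋₊ with hM
  have hd1 : (1:ℝ) ≤ d := by exact_mod_cast hd
  have hMr : r / (2 * d) ≤ (M : ℝ) := by
    rcases le_or_gt r (2 * d) with h | h
    · have : r / (2 * d) ≤ 1 := by
        rw [div_le_one (by positivity)]; exact h
      calc r / (2 * d) ≤ 1 := this
        _ ≤ (M : ℝ) := by exact_mod_cast le_max_left 1 _
    · have h1 : r / d - 1 < (⌊r / d⌋₊ : ℝ) + 1 - 1 := by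
        have := Nat.lt_floor_add_one (r / d)
        linarith
      have h2 : r / (2 * d) ≤ r / d - 1 := by
        rw [div_sub' (by positivity : (d:ℝ) ≠ 0), div_le_div_iff₀ (by positivity) (by positivity)]
        ring_nf
        nlinarith
      have h3 : (⌊r / d⌋₊ : ℝ) ≤ M := by exact_mod_cast le_max_right 1 _
      linarith
  have hceil : ((2 * ⌈2 * r⌉₊ + 1 : ℕ) : ℝ) ≤ 7 * r := by
    have h1 : (⌈2 * r⌉₊ : ℝ) ≤ 2 * r + 1 := by
      have := Nat.ceil_lt_add_one (by positivity : (0:ℝ) ≤ 2 * r)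
      linarith
    push_cast
    linarith
  have hupR : ((edgeBall d (2 * r)).ncard : ℝ) ≤ (d : ℝ) * (7 * r) ^ d := by
    calc ((edgeBall d (2 * r)).ncard : ℝ) ≤ ((d * (2 * ⌈2 * r⌉₊ + 1) ^ d : ℕ) : ℝ) := by
          exact_mod_cast hup
      _ = (d : ℝ) * ((2 * ⌈2 * r⌉₊ + 1 : ℕ) : ℝ) ^ d := by push_cast; ring
      _ ≤ (d : ℝ) * (7 * r) ^ d := by
          apply mul_le_mul_of_nonneg_left _ (by positivity)
          exact pow_le_pow_left₀ (by positivity) hceil d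
  have hloR : (d : ℝ) * (M : ℝ) ^ d ≤ ((edgeBall d r).ncard : ℝ) := by
    calc (d : ℝ) * (M : ℝ) ^ d = ((d * M ^ d : ℕ) : ℝ) := by push_cast; ring
      _ ≤ _ := by exact_mod_cast hlo
  calc ((edgeBall d (2 * r)).ncard : ℝ) ≤ (d : ℝ) * (7 * r) ^ d := hupR
    _ = (14 * d : ℝ) ^ d * ((d : ℝ) * (r / (2 * d)) ^ d) := by
        rw [← mul_assoc, mul_comm ((14 * d : ℝ) ^ d) (d:ℝ), mul_assoc, ← mul_pow]
        congr 2
        field_simp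
        ring
    _ ≤ (14 * d : ℝ) ^ d * ((d : ℝ) * (M : ℝ) ^ d) := by
        apply mul_le_mul_of_nonneg_left _ (by positivity)
        apply mul_le_mul_of_nonneg_left _ (by positivity)
        exact pow_le_pow_left₀ (by positivity) hMr d
    _ ≤ (14 * d : ℝ) ^ d * ((edgeBall d r).ncard : ℝ) := by
        apply mul_le_mul_of_nonneg_left hloR (by positivity)

noncomputable def cutoff (d : ℕ) (r : ℝ) : (Fin d → ℤ) → ℝ := fun x =>
  if r < 2 then (if latNorm x ≤ 2 * r - 1 then 1 else 0)
  else max 0 (min 1 (2 - (latNorm x + 1) / r))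

lemma cutoff_nonneg (d : ℕ) (r : ℝ) (x : Fin d → ℤ) : 0 ≤ cutoff d r x := by
  rw [cutoff]; split
  · split <;> norm_num
  · exact le_max_left _ _

lemma cutoff_le_one (d : ℕ) (r : ℝ) (hr : 1 ≤ r) (x : Fin d → ℤ) : cutoff d r x ≤ 1 := by
  rw [cutoff]; split
  · split <;> norm_num
  · apply max_le (by norm_num) (min_le_left _ _)

lemma cutoff_supp (d : ℕ) (r : ℝ) (hr : 1 ≤ r) (x : Fin d → ℤ) (hx : cutoff d r x ≠ 0) :
    latNorm x ≤ 2 * r - 1 := by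
  rw [cutoff] at hx
  by_contra hc
  push_neg at hc
  apply hx
  split
  · rw [if_neg (not_le.mpr hc)]
  · have hr0 : (0:ℝ) < r := by linarith
    have : 2 - (latNorm x + 1) / r ≤ 0 := by
      rw [sub_nonpos, le_div_iff₀ hr0]
      linarith
    rw [max_eq_left]
    exact le_trans (min_le_right _ _) this

lemma cutoff_half (d : ℕ) (r : ℝ) (hr : 1 ≤ r) (x : Fin d → ℤ) (hx : latNorm x ≤ r) :
    1 / 2 ≤ cutoff d r x := by
  rw [cutoff]
  split
  · rw [if_pos (by linarith)]; norm_num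
  · rename_i h
    push_neg at h
    have hr0 : (0:ℝ) < r := by linarith
    have ha : (latNorm x + 1) / r ≤ (r + 1) / r := by gcongr
    have hb : (r + 1) / r = 1 + 1 / r := by field_simp
    have h1 : 1 - 1 / r ≤ 2 - (latNorm x + 1) / r := by
      rw [hb] at ha; linarith
    have hc : 1 / r ≤ 1 / 2 := one_div_le_one_div_of_le (by norm_num) h
    have h2 : (1:ℝ)/2 ≤ 1 - 1/r := by linarith
    rcases le_or_gt 1 (2 - (latNorm x + 1) / r) with h3 | h3
    · rw [min_eq_left h3, max_eq_right (by norm_num)]; norm_num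
    · rw [min_eq_right h3.le, max_eq_right (by linarith)]
      linarith

lemma cutoff_lip (d : ℕ) (r : ℝ) (hr : 1 ≤ r) (e : Edge d) :
    |cutoff d r e.head - cutoff d r e.1| ≤ 2 / r := by
  have hr0 : (0:ℝ) < r := by linarith
  have hedge := abs_latNorm_sub_edge e
  rw [cutoff, cutoff]
  split
  · rename_i h
    have h2r : (1:ℝ) ≤ 2 / r := by
      rw [le_div_iff₀ hr0]; linarith
    split <;> split <;> simp <;> linarith
  · rename_i h
    push_neg at h
    have key : |max 0 (min 1 (2 - (latNorm e.head + 1) / r))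
        - max 0 (min 1 (2 - (latNorm e.1 + 1) / r))| ≤
        |(2 - (latNorm e.head + 1) / r) - (2 - (latNorm e.1 + 1) / r)| := by
      calc _ ≤ |min 1 (2 - (latNorm e.head + 1) / r) - min 1 (2 - (latNorm e.1 + 1) / r)| := by
            rw [max_comm 0 _, max_comm 0 _]
            exact abs_max_sub_max_le_abs _ _ _
        _ ≤ _ := by
            rw [min_comm 1 _, min_comm 1 _]
            have := abs_min_sub_min_le_max (2 - (latNorm e.head + 1) / r) 1
              (2 - (latNorm e.1 + 1) / r) 1
            simpa using this
    have h2 : |(2 - (latNorm e.head + 1) / r) - (2 - (latNorm e.1 + 1) / r)| ≤ 1 / r := by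
      have : (2 - (latNorm e.head + 1) / r) - (2 - (latNorm e.1 + 1) / r)
          = -((latNorm e.head - latNorm e.1) / r) := by ring
      rw [this, abs_neg, abs_div, abs_of_pos hr0]
      gcongr
    calc _ ≤ 1 / r := le_trans key h2
      _ ≤ 2 / r := by gcongr; norm_num

lemma young2 (a X Y : ℝ) (ha : 0 < a) : -(2 * (X * Y)) ≤ a * X^2 + a⁻¹ * Y^2 := by
  have key : a * (X + a⁻¹ * Y)^2 = a * X^2 + 2 * (X * Y) + a⁻¹ * Y^2 := by
    field_simp
    ring
  nlinarith [mul_nonneg ha.le (sq_nonneg (X + a⁻¹ * Y))]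

lemma young2' (a X Y : ℝ) (ha : 0 < a) : -(2 * (X * Y)) ≤ (1/4) * (a * X^2) + 4 * (a⁻¹ * Y^2) := by
  have hthis := young2 (a/4) X Y (by linarith)
  have h4 : (a/4)⁻¹ = 4 * a⁻¹ := by
    field_simp
  rw [h4] at hthis
  nlinarith [hthis]

lemma young1 (a F g : ℝ) (ha : 0 < a) : -(F * g) ≤ (1/4) * (a * g^2) + a⁻¹ * F^2 := by
  have hthis := young2 (a/2) g F (by linarith)
  have h4 : (a/2)⁻¹ = 2 * a⁻¹ := by field_simp
  rw [h4] at hthis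
  nlinarith [hthis]

lemma edgeSetAvg_eq {d : ℕ} (S : Set (Edge d)) (hS : S.Finite) (F : Edge d → ℝ) :
    edgeSetAvg S F = (S.ncard : ℝ)⁻¹ * ∑ e ∈ hS.toFinset, F e := by
  rw [edgeSetAvg, ← finsum_mem_coe_finset, hS.coe_toFinset]

set_option maxHeartbeats 2000000 in
theorem discrete_caccioppoli (d : ℕ) (hd : 1 ≤ d) :
    ∃ C : ℝ, 0 < C ∧
      ∀ (a : Edge d → ℝ), (∀ e, 0 < a e) →
      ∀ (u : (Fin d → ℤ) → ℝ) (f : (Fin d → ℤ) → Fin d → ℝ),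
        -- weak formulation of `-∇*·A∇u = ∇*·f`
        (∀ φ : (Fin d → ℤ) → ℝ, (Function.support φ).Finite →
          ∑ᶠ e : Edge d, a e * edgeGrad u e * edgeGrad φ e
            = -∑ᶠ e : Edge d, f e.1 e.2 * edgeGrad φ e) →
      ∀ (r : ℝ), 1 ≤ r → ∀ c : ℝ,
        edgeSetAvg (edgeBall d r) (fun e => a e * (edgeGrad u e) ^ 2)
          ≤ C * (r ^ (-2 : ℤ) *
                  edgeSetAvg (edgeBall d (2 * r))
                    (fun e => a e * (edgeAvg (fun x => u x - c) e) ^ 2)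
                + edgeSetAvg (edgeBall d (2 * r))
                    (fun e => (a e)⁻¹ * (f e.1 e.2) ^ 2)) := by
  classical
  refine ⟨320 * (14 * d : ℝ) ^ d, ?_, ?_⟩
  · have hd0 : (0:ℝ) < d := by exact_mod_cast hd
    positivity
  intro a ha u f hyp r hr c
  have hr0 : (0:ℝ) < r := by linarith
  have hr2 : (1:ℝ) ≤ 2 * r := by linarith
  set K : ℝ := (14 * d : ℝ) ^ d with hK
  have hK0 : 0 < K := by
    have hd0 : (0:ℝ) < d := by exact_mod_cast hd
    positivity
  set η : (Fin d → ℤ) → ℝ := cutoff d r with hη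
  set v : (Fin d → ℤ) → ℝ := fun x => u x - c with hv
  set φ : (Fin d → ℤ) → ℝ := fun x => (η x)^2 * v x with hφ
  -- edge quantities
  set g : Edge d → ℝ := fun e => edgeGrad u e with hg
  set b : Edge d → ℝ := fun e => edgeAvg v e with hb
  set h : Edge d → ℝ := fun e => (η e.1 + η e.head) / 2 with hh
  set k : Edge d → ℝ := fun e => edgeGrad η e with hk
  set H : Edge d → ℝ := fun e => ((η e.1)^2 + (η e.head)^2) / 2 with hH
  set F : Edge d → ℝ := fun e => f e.1 e.2 with hF
  set P : Edge d → ℝ := fun e => a e * H e * (g e)^2 with hP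
  set Q : Edge d → ℝ := fun e => 2 * (a e) * g e * b e * h e * k e with hQ
  set F1 : Edge d → ℝ := fun e => F e * H e * g e with hF1
  set F2 : Edge d → ℝ := fun e => 2 * F e * b e * h e * k e with hF2
  set R : Edge d → ℝ := fun e => 5 * (a e * (b e)^2 * (k e)^2)
      + (H e + (h e)^2) * ((a e)⁻¹ * (F e)^2) with hR
  have hEfin : (edgeBall d (2*r)).Finite := edgeBall_fin d (2*r)
  have hErfin : (edgeBall d r).Finite := edgeBall_fin d r
  set E : Finset (Edge d) := hEfin.toFinset with hE
  set Er : Finset (Edge d) := hErfin.toFinset with hEr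
  -- basic cutoff facts
  have hη0 : ∀ x, 0 ≤ η x := cutoff_nonneg d r
  have hη1 : ∀ x, η x ≤ 1 := cutoff_le_one d r hr
  have hsupp : ∀ e : Edge d, (η e.1 ≠ 0 ∨ η e.head ≠ 0) → e ∈ E := by
    intro e he
    rw [hE, Set.Finite.mem_toFinset]
    rcases he with he | he
    · have h1 := cutoff_supp d r hr e.1 he
      have h2 := latNorm_head_le e
      exact ⟨by linarith, by linarith⟩
    · have h1 := cutoff_supp d r hr e.head he
      have h2 := latNorm_base_le e
      exact ⟨by linarith, by linarith⟩
  -- φ has finite support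
  have hφfin : (Function.support φ).Finite := by
    apply Set.Finite.subset (ball_finite d (2*r))
    intro x hx
    have hxη : η x ≠ 0 := by
      intro h0
      apply hx
      simp [hφ, h0]
    have := cutoff_supp d r hr x hxη
    simp only [Set.mem_setOf_eq]
    linarith
  -- gradient of φ vanishes off E
  have hgradφ : ∀ e : Edge d, e ∉ E → edgeGrad φ e = 0 := by
    intro e he
    have h1 : η e.1 = 0 := by
      by_contra hc
      exact he (hsupp e (Or.inl hc))
    have h2 : η e.head = 0 := by
      by_contra hc
      exact he (hsupp e (Or.inr hc))
    simp [edgeGrad, hφ, h1, h2]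
  -- the equation as finite sums over E
  have hEq0 := hyp φ hφfin
  have hsum1 : ∑ᶠ e : Edge d, a e * edgeGrad u e * edgeGrad φ e
      = ∑ e ∈ E, a e * edgeGrad u e * edgeGrad φ e := by
    apply finsum_eq_sum_of_support_subset
    intro e he
    simp only [Function.mem_support] at he
    by_contra hc
    rw [hgradφ e hc] at he
    simp at he
  have hsum2 : ∑ᶠ e : Edge d, f e.1 e.2 * edgeGrad φ e
      = ∑ e ∈ E, f e.1 e.2 * edgeGrad φ e := by
    apply finsum_eq_sum_of_support_subset
    intro e he
    simp only [Function.mem_support] at he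
    by_contra hc
    rw [hgradφ e hc] at he
    simp at he
  rw [hsum1, hsum2] at hEq0
  -- pointwise decomposition of the gradient of φ
  have hdecomp : ∀ e : Edge d, edgeGrad φ e = H e * g e + 2 * b e * h e * k e := by
    intro e
    simp only [hφ, hH, hg, hb, hh, hk, hv, edgeGrad, edgeAvg]
    ring
  have hA1 : ∀ e : Edge d, a e * edgeGrad u e * edgeGrad φ e = P e + Q e := by
    intro e
    rw [hdecomp e]
    simp only [hP, hQ, hg]
    ring
  have hA2 : ∀ e : Edge d, f e.1 e.2 * edgeGrad φ e = F1 e + F2 e := by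
    intro e
    rw [hdecomp e]
    simp only [hF1, hF2, hF]
    ring
  rw [Finset.sum_congr rfl (fun e _ => hA1 e), Finset.sum_congr rfl (fun e _ => hA2 e)] at hEq0
  rw [Finset.sum_add_distrib, Finset.sum_add_distrib] at hEq0
  -- pointwise facts
  have hh2H : ∀ e : Edge d, (h e)^2 ≤ H e := by
    intro e
    simp only [hh, hH]
    nlinarith [sq_nonneg (η e.1 - η e.head)]
  have hH0 : ∀ e : Edge d, 0 ≤ H e := by
    intro e
    simp only [hH]
    positivity
  have hH1 : ∀ e : Edge d, H e ≤ 1 := by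
    intro e
    simp only [hH]
    nlinarith [hη0 e.1, hη1 e.1, hη0 e.head, hη1 e.head]
  have hh0 : ∀ e : Edge d, 0 ≤ h e := by
    intro e
    simp only [hh]
    have := hη0 e.1; have := hη0 e.head; linarith
  have hh1 : ∀ e : Edge d, h e ≤ 1 := by
    intro e
    simp only [hh]
    have := hη1 e.1; have := hη1 e.head; linarith
  -- pointwise Young inequalities
  have e1 : ∀ e : Edge d, -Q e ≤ (1/4) * P e + 4 * (a e * (b e)^2 * (k e)^2) := by
    intro e
    have hHge : 0 ≤ a e * ((H e - (h e)^2) * (g e)^2) :=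
      mul_nonneg (ha e).le (mul_nonneg (by linarith [hh2H e]) (sq_nonneg _))
    simp only [hQ, hP]
    nlinarith [mul_nonneg (ha e).le (sq_nonneg ((1/2)*(h e * g e) + 2*(b e * k e))), hHge]
  have e2 : ∀ e : Edge d, -F1 e ≤ (1/4) * P e + H e * ((a e)⁻¹ * (F e)^2) := by
    intro e
    have hy := young1 (a e) (F e) (g e) (ha e)
    have := mul_le_mul_of_nonneg_left hy (hH0 e)
    simp only [hF1, hP]
    nlinarith [this]
  have e3 : ∀ e : Edge d, -F2 e ≤ a e * (b e)^2 * (k e)^2 + (h e)^2 * ((a e)⁻¹ * (F e)^2) := by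
    intro e
    have hy := young2 (a e) (b e * k e) (h e * F e) (ha e)
    simp only [hF2]
    nlinarith [hy]
  -- main energy bound
  have hS4R : ∑ e ∈ E, P e ≤ 4 * ∑ e ∈ E, R e := by
    have hpoint : ∀ e ∈ E, -Q e - F1 e - F2 e ≤ (3/4) * P e + R e := by
      intro e _
      have := e1 e; have := e2 e; have := e3 e
      have hP0 : 0 ≤ P e := by
        simp only [hP]
        exact mul_nonneg (mul_nonneg (ha e).le (hH0 e)) (sq_nonneg _)
      simp only [hR]
      nlinarith
    have hsum : ∑ e ∈ E, (-Q e - F1 e - F2 e) ≤ ∑ e ∈ E, ((3/4) * P e + R e) :=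
      Finset.sum_le_sum hpoint
    rw [Finset.sum_add_distrib, ← Finset.mul_sum] at hsum
    have hsplit : ∑ e ∈ E, (-Q e - F1 e - F2 e)
        = -∑ e ∈ E, Q e - ∑ e ∈ E, F1 e - ∑ e ∈ E, F2 e := by
      rw [Finset.sum_sub_distrib, Finset.sum_sub_distrib, Finset.sum_neg_distrib]
    rw [hsplit] at hsum
    linarith [hEq0]
  -- bound on the error term
  have hRbound : ∑ e ∈ E, R e
      ≤ ∑ e ∈ E, (20 / r^2 * (a e * (b e)^2) + 2 * ((a e)⁻¹ * (F e)^2)) := by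
    apply Finset.sum_le_sum
    intro e _
    have hlip : |k e| ≤ 2 / r := by
      simp only [hk, hη, edgeGrad]
      exact cutoff_lip d r hr e
    have hk2 : (k e)^2 ≤ 4 / r^2 := by
      have h1 : (k e)^2 ≤ (2/r)^2 := by
        rw [← sq_abs]
        exact pow_le_pow_left₀ (abs_nonneg _) hlip 2
      calc (k e)^2 ≤ (2/r)^2 := h1
        _ = 4 / r^2 := by ring
    have hab2 : 0 ≤ a e * (b e)^2 := mul_nonneg (ha e).le (sq_nonneg _)
    have haF2 : 0 ≤ (a e)⁻¹ * (F e)^2 := mul_nonneg (inv_pos.mpr (ha e)).le (sq_nonneg _)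
    have hHh2 : H e + (h e)^2 ≤ 2 := by
      have h1 := hH1 e
      have h2 := hh1 e
      have h3 := hh0 e
      nlinarith
    simp only [hR]
    have hterm1 : 5 * (a e * (b e)^2 * (k e)^2) ≤ 20 / r^2 * (a e * (b e)^2) := by
      calc 5 * (a e * (b e)^2 * (k e)^2) ≤ 5 * (a e * (b e)^2 * (4 / r^2)) := by
            apply mul_le_mul_of_nonneg_left _ (by norm_num)
            exact mul_le_mul_of_nonneg_left hk2 hab2
        _ = 20 / r^2 * (a e * (b e)^2) := by ring
    have hterm2 : (H e + (h e)^2) * ((a e)⁻¹ * (F e)^2) ≤ 2 * ((a e)⁻¹ * (F e)^2) :=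
      mul_le_mul_of_nonneg_right hHh2 haF2
    linarith
  -- lower bound for the left-hand side
  have hErE : Er ⊆ E := by
    rw [hEr, hE, Set.Finite.toFinset_subset_toFinset]
    intro e he
    exact ⟨by linarith [he.1], by linarith [he.2]⟩
  have hLHS : ∑ e ∈ Er, (a e * (g e)^2) ≤ 4 * ∑ e ∈ E, P e := by
    have step1 : ∑ e ∈ Er, (a e * (g e)^2) ≤ ∑ e ∈ Er, (4 * P e) := by
      apply Finset.sum_le_sum
      intro e he
      rw [hEr, Set.Finite.mem_toFinset] at he
      have hhalf1 : 1/2 ≤ η e.1 := cutoff_half d r hr e.1 he.1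
      have hhalf2 : 1/2 ≤ η e.head := cutoff_half d r hr e.head he.2
      have hhh : 1/2 ≤ h e := by
        simp only [hh]; linarith
      have hH4 : 1/4 ≤ H e := by
        nlinarith [hh2H e]
      simp only [hP]
      nlinarith [mul_nonneg (mul_nonneg (ha e).le (by linarith : (0:ℝ) ≤ 4 * H e - 1))
        (sq_nonneg (g e))]
    have step2 : ∑ e ∈ Er, (4 * P e) ≤ ∑ e ∈ E, (4 * P e) := by
      apply Finset.sum_le_sum_of_subset_of_nonneg hErE
      intro e _ _
      have : 0 ≤ P e := mul_nonneg (mul_nonneg (ha e).le (hH0 e)) (sq_nonneg _)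
      linarith
    have step3 : ∑ e ∈ E, (4 * P e) = 4 * ∑ e ∈ E, P e := (Finset.mul_sum _ _ _).symm
    have step0 : ∑ e ∈ Er, (4 * P e) = 4 * ∑ e ∈ Er, P e := (Finset.mul_sum _ _ _).symm
    linarith
  -- put everything together
  rw [edgeSetAvg_eq (edgeBall d r) hErfin, edgeSetAvg_eq (edgeBall d (2*r)) hEfin,
    edgeSetAvg_eq (edgeBall d (2*r)) hEfin]
  set Nr : ℝ := ((edgeBall d r).ncard : ℝ) with hNr
  set N2 : ℝ := ((edgeBall d (2*r)).ncard : ℝ) with hN2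
  have hNr0 : 0 < Nr := by
    rw [hNr]
    exact_mod_cast edgeBall_pos d hd r hr
  have hN20 : 0 < N2 := by
    rw [hN2]
    exact_mod_cast edgeBall_pos d hd (2*r) hr2
  have hratio : N2 ≤ K * Nr := by
    rw [hN2, hNr, hK]
    exact edgeBall_ratio d hd r hr
  set L : ℝ := ∑ e ∈ Er, (a e * (g e)^2) with hL
  set A2s : ℝ := ∑ e ∈ E, (a e * (b e)^2) with hA2s
  set A3s : ℝ := ∑ e ∈ E, ((a e)⁻¹ * (F e)^2) with hA3s
  have hL0 : 0 ≤ L := by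
    rw [hL]
    apply Finset.sum_nonneg
    intro e _
    exact mul_nonneg (ha e).le (sq_nonneg _)
  have hA30 : 0 ≤ A3s := by
    rw [hA3s]
    apply Finset.sum_nonneg
    intro e _
    exact mul_nonneg (inv_pos.mpr (ha e)).le (sq_nonneg _)
  have hmain : L ≤ 320 / r^2 * A2s + 32 * A3s := by
    have h1 : L ≤ 4 * ∑ e ∈ E, P e := hLHS
    have h2 := hS4R
    have h3 := hRbound
    have hq1 : ∑ e ∈ E, (20 / r^2 * (a e * (b e)^2) + 2 * ((a e)⁻¹ * (F e)^2))
        = 20 / r^2 * A2s + 2 * A3s := by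
      rw [Finset.sum_add_distrib, hA2s, hA3s, Finset.mul_sum, Finset.mul_sum]
    rw [hq1] at h3
    clear_value L A2s A3s
    have e1 : 20 / r^2 * A2s = 20 * ((r^2)⁻¹ * A2s) := by ring
    have e2 : 320 / r^2 * A2s = 320 * ((r^2)⁻¹ * A2s) := by ring
    rw [e1] at h3
    rw [e2]
    linarith [h1, h2, h3]
  have hinv : Nr⁻¹ ≤ K * N2⁻¹ := by
    have h1 : 1 / Nr ≤ K / N2 := by
      rw [div_le_div_iff₀ hNr0 hN20]
      nlinarith
    calc Nr⁻¹ = 1 / Nr := (one_div Nr).symm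
      _ ≤ K / N2 := h1
      _ = K * N2⁻¹ := by rw [div_eq_mul_inv]
  have hzpow : r ^ (-2 : ℤ) = (r^2)⁻¹ := by
    rw [zpow_neg]
    congr 1
  rw [hzpow]
  clear_value K L A2s A3s Nr N2
  calc Nr⁻¹ * L ≤ (K * N2⁻¹) * L := mul_le_mul_of_nonneg_right hinv hL0
    _ ≤ (K * N2⁻¹) * (320 / r^2 * A2s + 32 * A3s) := by
        apply mul_le_mul_of_nonneg_left hmain
        exact mul_nonneg hK0.le (inv_pos.mpr hN20).le
    _ = 320 * K * ((r^2)⁻¹ * (N2⁻¹ * A2s)) + 32 * (K * (N2⁻¹ * A3s)) := by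
        ring
    _ ≤ 320 * K * ((r^2)⁻¹ * (N2⁻¹ * A2s) + N2⁻¹ * A3s) := by
        have h2 : 0 ≤ K * (N2⁻¹ * A3s) :=
          mul_nonneg hK0.le (mul_nonneg (inv_pos.mpr hN20).le hA30)
        nlinarith
end

section
/- Young convolution step for averaged gradients: for ψ : ℤ^d → ℝ, radii R ≥ 1, exponent s ≥ 1, S ≥ s with τ := d(1/s − 1/S) ∈ [0,1], and μ ∈ (0,1), one has (⨍_{x∈B_R} (⨍_{B_{R^μ}(x)} |∇ψ|^s)^{S/s})^{1/S} ≲_s R^{τ(1−μ)} (⨍_{B_{2R}} |∇ψ|^s)^{1/s}. -/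
/-- Lattice ball of radius `ρ` centered at `x`. -/
def latBall {d : ℕ} (x : Fin d → ℤ) (ρ : ℝ) : Set (Fin d → ℤ) := {y | latNorm (y - x) ≤ ρ}

/-- Average of a function over a set. -/
noncomputable def setAvg {d : ℕ} (S : Set (Fin d → ℤ)) (F : (Fin d → ℤ) → ℝ) : ℝ :=
  (S.ncard : ℝ)⁻¹ * ∑ᶠ y ∈ S, F y

/-- Euclidean norm of the discrete forward gradient of `ψ` at `x`. -/
noncomputable def gradNorm {d : ℕ} (ψ : (Fin d → ℤ) → ℝ) (x : Fin d → ℤ) : ℝ :=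
  Real.sqrt (∑ i, (ψ (x + Pi.single i 1) - ψ x) ^ 2)

namespace YoungAux
variable {d : ℕ}

lemma latNorm_nonneg (v : Fin d → ℤ) : 0 ≤ latNorm v := Real.sqrt_nonneg _

lemma latNorm_neg (v : Fin d → ℤ) : latNorm (-v) = latNorm v := by
  unfold latNorm; congr 1; apply Finset.sum_congr rfl; intros i _
  simp only [Pi.neg_apply, Int.cast_neg, neg_sq]

lemma latNorm_zero : latNorm (0 : Fin d → ℤ) = 0 := by
  simp [latNorm]

lemma abs_le_latNorm (v : Fin d → ℤ) (i : Fin d) : |((v i : ℝ))| ≤ latNorm v := by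
  have h1 : ((v i : ℝ))^2 ≤ ∑ j, ((v j : ℝ))^2 :=
    Finset.single_le_sum (f := fun j => ((v j : ℝ))^2) (fun j _ => by positivity) (Finset.mem_univ i)
  have := Real.sqrt_le_sqrt h1
  rwa [Real.sqrt_sq_eq_abs] at this

lemma latNorm_triangle (a b : Fin d → ℤ) : latNorm (a + b) ≤ latNorm a + latNorm b := by
  have key : ∀ v : Fin d → ℤ, latNorm v =
      ‖(WithLp.equiv 2 (Fin d → ℝ)).symm (fun i => ((v i : ℝ)))‖ := by
    intro v
    rw [EuclideanSpace.norm_eq]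
    unfold latNorm
    congr 1
    apply Finset.sum_congr rfl
    intro i _
    rw [Real.norm_eq_abs, sq_abs]
    rfl
  rw [key, key, key]
  have : ((WithLp.equiv 2 (Fin d → ℝ)).symm (fun i => (((a+b) i : ℝ))))
      = (WithLp.equiv 2 (Fin d → ℝ)).symm (fun i => ((a i : ℝ)))
        + (WithLp.equiv 2 (Fin d → ℝ)).symm (fun i => ((b i : ℝ))) := by
    ext i
    simp only [WithLp.equiv_symm_apply, PiLp.toLp_apply, PiLp.add_apply, Int.cast_add, Pi.add_apply]
  rw [this]
  exact norm_add_le _ _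

lemma latBall_finite (x : Fin d → ℤ) (ρ : ℝ) : (latBall x ρ).Finite := by
  apply Set.Finite.subset (Set.finite_Icc (x - fun _ => ⌈ρ⌉) (x + fun _ => ⌈ρ⌉))
  intro y hy
  have habs : ∀ i, |((y - x) i : ℝ)| ≤ ρ := fun i => (abs_le_latNorm _ i).trans hy
  have habsz : ∀ i, |y i - x i| ≤ ⌈ρ⌉ := by
    intro i
    have := (habs i).trans (Int.le_ceil ρ)
    have h2 : ((|y i - x i| : ℤ) : ℝ) ≤ ((⌈ρ⌉ : ℤ) : ℝ) := by
      rw [Int.cast_abs]; exact_mod_cast this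
    exact_mod_cast h2
  constructor
  · intro i
    have := (abs_le.mp (habsz i)).1
    simp only [Pi.sub_apply]
    linarith
  · intro i
    have := (abs_le.mp (habsz i)).2
    simp only [Pi.add_apply]
    linarith

lemma self_mem_latBall (x : Fin d → ℤ) {ρ : ℝ} (hρ : 0 ≤ ρ) : x ∈ latBall x ρ := by
  simp only [latBall, Set.mem_setOf_eq, sub_self, latNorm_zero]
  exact hρ

end YoungAux

namespace YoungAux2
open YoungAux
variable {d : ℕ}

lemma card_box (x c : Fin d → ℤ) (hc : ∀ i, 0 ≤ c i) :
    (Finset.Icc (x - c) (x + c)).card = ∏ i, ((2 * c i + 1).toNat) := by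
  rw [Pi.card_Icc]
  apply Finset.prod_congr rfl
  intro i _
  rw [Int.card_Icc]
  congr 1
  simp only [Pi.add_apply, Pi.sub_apply]
  ring

lemma ncard_latBall_le (x : Fin d → ℤ) {ρ : ℝ} (hρ : 1 ≤ ρ) :
    ((latBall x ρ).ncard : ℝ) ≤ (5 * ρ) ^ d := by
  have hsub : latBall x ρ ⊆ ↑(Finset.Icc (x - fun _ => ⌈ρ⌉) (x + fun _ => ⌈ρ⌉)) := by
    intro y hy
    have habs : ∀ i, |((y - x) i : ℝ)| ≤ ρ := fun i => (abs_le_latNorm _ i).trans hy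
    have habsz : ∀ i, |y i - x i| ≤ ⌈ρ⌉ := by
      intro i
      have := (habs i).trans (Int.le_ceil ρ)
      have h2 : ((|y i - x i| : ℤ) : ℝ) ≤ ((⌈ρ⌉ : ℤ) : ℝ) := by
        rw [Int.cast_abs]; exact_mod_cast this
      exact_mod_cast h2
    simp only [Finset.coe_Icc, Set.mem_Icc]
    constructor
    · intro i; have := (abs_le.mp (habsz i)).1; simp only [Pi.sub_apply]; linarith
    · intro i; have := (abs_le.mp (habsz i)).2; simp only [Pi.add_apply]; linarith
  have h1 : (latBall x ρ).ncard ≤ (Finset.Icc (x - fun _ => ⌈ρ⌉) (x + fun _ => ⌈ρ⌉)).card := by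
    rw [← Set.ncard_coe_finset]
    exact Set.ncard_le_ncard hsub (Finset.finite_toSet _)
  have hc : (0:ℤ) ≤ ⌈ρ⌉ := by positivity
  rw [card_box x _ (fun _ => hc)] at h1
  have hcube : ((∏ _i : Fin d, (2 * ⌈ρ⌉ + 1).toNat : ℕ) : ℝ) ≤ (5 * ρ) ^ d := by
    rw [Finset.prod_const, Finset.card_univ, Fintype.card_fin]
    push_cast
    apply pow_le_pow_left₀ (by positivity)
    have h3 : ((2 * ⌈ρ⌉ + 1).toNat : ℝ) = ((2 * ⌈ρ⌉ + 1 : ℤ) : ℝ) := by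
      exact_mod_cast Int.toNat_of_nonneg (by linarith : (0:ℤ) ≤ 2 * ⌈ρ⌉ + 1)
    rw [h3]
    push_cast
    have := Int.ceil_lt_add_one ρ
    have h4 : (⌈ρ⌉ : ℝ) < ρ + 1 := by exact_mod_cast this
    linarith
  calc ((latBall x ρ).ncard : ℝ) ≤ _ := by exact_mod_cast h1
    _ ≤ (5*ρ)^d := hcube

lemma le_ncard_latBall (x : Fin d → ℤ) {ρ : ℝ} (hρ : 0 ≤ ρ) (hd : 1 ≤ d) :
    (ρ / Real.sqrt d) ^ d ≤ ((latBall x ρ).ncard : ℝ) := by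
  have hsd : (1:ℝ) ≤ Real.sqrt d := by
    rw [show (1:ℝ) = Real.sqrt 1 by simp]
    exact Real.sqrt_le_sqrt (by exact_mod_cast hd)
  have hsd0 : (0:ℝ) < Real.sqrt d := by linarith
  set t : ℝ := ρ / Real.sqrt d with ht
  have ht0 : 0 ≤ t := div_nonneg hρ hsd0.le
  set m : ℤ := ⌊t⌋ with hm
  have hm0 : (0:ℤ) ≤ m := Int.floor_nonneg.mpr ht0
  have hmt : (m : ℝ) ≤ t := Int.floor_le t
  -- box ⊆ ball
  have hsub : ↑(Finset.Icc (x - fun _ => m) (x + fun _ => m)) ⊆ latBall x ρ := by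
    intro y hy
    simp only [Finset.coe_Icc, Set.mem_Icc] at hy
    have habs : ∀ i, |((y - x) i : ℝ)| ≤ (m : ℝ) := by
      intro i
      have h1 := hy.1 i
      have h2 := hy.2 i
      simp only [Pi.sub_apply, Pi.add_apply] at h1 h2
      have : |y i - x i| ≤ m := abs_le.mpr ⟨by linarith, by linarith⟩
      have h3 : ((|y i - x i| : ℤ) : ℝ) ≤ ((m : ℤ) : ℝ) := by exact_mod_cast this
      rw [Int.cast_abs] at h3
      simpa using h3
    show latNorm (y - x) ≤ ρ
    unfold latNorm
    have hsum : (∑ i, (((y - x) i : ℝ))^2) ≤ d * (m:ℝ)^2 := by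
      calc (∑ i, (((y - x) i : ℝ))^2) ≤ ∑ _i : Fin d, (m:ℝ)^2 := by
            apply Finset.sum_le_sum
            intro i _
            have h := habs i
            calc (((y - x) i : ℝ))^2 = |((y - x) i : ℝ)|^2 := (sq_abs _).symm
              _ ≤ (m:ℝ)^2 := pow_le_pow_left₀ (abs_nonneg _) h 2
        _ = d * (m:ℝ)^2 := by rw [Finset.sum_const, Finset.card_univ, Fintype.card_fin, nsmul_eq_mul]
    have hmρ : (d:ℝ) * (m:ℝ)^2 ≤ ρ^2 := by
      have h1 : (m:ℝ)^2 ≤ t^2 := pow_le_pow_left₀ (by exact_mod_cast hm0) hmt 2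
      have h2 : (d:ℝ) * t^2 = ρ^2 := by
        have hdsq : Real.sqrt d ^ 2 = (d:ℝ) := Real.sq_sqrt (by positivity)
        rw [ht, div_pow, hdsq]
        field_simp
      have hd0 : (0:ℝ) ≤ (d:ℝ) := by positivity
      nlinarith
    calc Real.sqrt (∑ i, (((y - x) i : ℝ))^2) ≤ Real.sqrt (ρ^2) :=
          Real.sqrt_le_sqrt (by linarith)
      _ = ρ := Real.sqrt_sq hρ
  have hcard : (Finset.Icc (x - fun _ => m) (x + fun _ => m)).card ≤ (latBall x ρ).ncard := by
    rw [← Set.ncard_coe_finset]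
    exact Set.ncard_le_ncard hsub (latBall_finite x ρ)
  rw [card_box x _ (fun _ => hm0)] at hcard
  have hbase : t ≤ ((2 * m + 1).toNat : ℝ) := by
    have h3 : ((2 * m + 1).toNat : ℝ) = ((2 * m + 1 : ℤ) : ℝ) := by
      exact_mod_cast Int.toNat_of_nonneg (by linarith : (0:ℤ) ≤ 2 * m + 1)
    rw [h3]
    push_cast
    have := Int.lt_floor_add_one t
    have h4 : t < (m : ℝ) + 1 := by exact_mod_cast this
    have h5 : (0:ℝ) ≤ (m:ℝ) := by exact_mod_cast hm0
    linarith
  calc t ^ d ≤ ((2 * m + 1).toNat : ℝ) ^ d := pow_le_pow_left₀ ht0 hbase d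
    _ = ((∏ _i : Fin d, (2 * m + 1).toNat : ℕ) : ℝ) := by
        rw [Finset.prod_const, Finset.card_univ, Fintype.card_fin]; push_cast; ring
    _ ≤ _ := by exact_mod_cast hcard

lemma ncard_latBall_translate (x : Fin d → ℤ) (ρ : ℝ) :
    (latBall x ρ).ncard = (latBall (0 : Fin d → ℤ) ρ).ncard := by
  have himg : latBall x ρ = (· + x) '' latBall (0 : Fin d → ℤ) ρ := by
    ext y
    simp only [latBall, Set.mem_setOf_eq, Set.mem_image]
    constructor
    · intro h
      exact ⟨y - x, by simpa using h, by abel⟩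
    · rintro ⟨z, hz, rfl⟩
      simpa using hz
  rw [himg, Set.ncard_image_of_injective _ (add_left_injective x)]

lemma ncard_latBall_pos (x : Fin d → ℤ) {ρ : ℝ} (hρ : 0 ≤ ρ) :
    0 < (latBall x ρ).ncard := by
  rw [Set.ncard_pos (latBall_finite x ρ)]
  exact ⟨x, self_mem_latBall x hρ⟩

lemma setAvg_eq (S : Set (Fin d → ℤ)) (hS : S.Finite) (F : (Fin d → ℤ) → ℝ) :
    setAvg S F = (S.ncard : ℝ)⁻¹ * ∑ y ∈ hS.toFinset, F y := by
  rw [setAvg, ← finsum_mem_coe_finset, hS.coe_toFinset]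

end YoungAux2

namespace YoungMain
open YoungAux YoungAux2

lemma rpow_le_mul {t M p : ℝ} (ht : 0 ≤ t) (htM : t ≤ M) (hp : 1 ≤ p) :
    t ^ p ≤ M ^ (p - 1) * t := by
  rcases eq_or_lt_of_le ht with h | h
  · rw [← h, Real.zero_rpow (by positivity : p ≠ 0), mul_zero]
  · have h1 : t ^ p = t ^ (p - 1) * t := by
      rw [← Real.rpow_add_one h.ne' (p - 1), sub_add_cancel]
    rw [h1]
    exact mul_le_mul_of_nonneg_right (Real.rpow_le_rpow h.le htM (by linarith)) h.le

lemma latBall_mono {d : ℕ} (x : Fin d → ℤ) {ρ₁ ρ₂ : ℝ} (h : ρ₁ ≤ ρ₂) :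
    latBall x ρ₁ ⊆ latBall x ρ₂ := fun y hy => le_trans hy h

end YoungMain

set_option maxHeartbeats 1000000 in
open YoungAux YoungAux2 YoungMain in
theorem young_convolution_step (d : ℕ) (hd : 1 ≤ d) (s : ℝ) (hs : 1 ≤ s) :
    ∃ C : ℝ, 0 < C ∧
      ∀ S : ℝ, s ≤ S → 0 ≤ (d : ℝ) * (1 / s - 1 / S) → (d : ℝ) * (1 / s - 1 / S) ≤ 1 →
      ∀ μ : ℝ, 0 < μ → μ < 1 →
      ∀ R : ℝ, 1 ≤ R →
      ∀ ψ : (Fin d → ℤ) → ℝ,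
        (setAvg (latBall (0 : Fin d → ℤ) R)
            (fun x => (setAvg (latBall x (R ^ μ)) (fun y => gradNorm ψ y ^ s)) ^ (S / s)))
            ^ (1 / S)
          ≤ C * R ^ (((d : ℝ) * (1 / s - 1 / S)) * (1 - μ))
              * (setAvg (latBall (0 : Fin d → ℤ) (2 * R)) (fun y => gradNorm ψ y ^ s)) ^ (1 / s) := by
  classical
  have hd1 : (1:ℝ) ≤ (d:ℝ) := by exact_mod_cast hd
  have hsd1 : (1:ℝ) ≤ Real.sqrt d := by
    rw [show (1:ℝ) = Real.sqrt 1 by simp]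
    exact Real.sqrt_le_sqrt hd1
  set c0 : ℝ := 10 * Real.sqrt d with hc0
  have hc01 : (1:ℝ) ≤ c0 := by rw [hc0]; nlinarith
  have hc00 : (0:ℝ) < c0 := by linarith
  refine ⟨c0 * c0 ^ d, mul_pos hc00 (pow_pos hc00 d), ?_⟩
  intro S hsS hτ0 hτ1 μ hμ0 hμ1 R hR ψ
  have hs0 : (0:ℝ) < s := by linarith
  have hS0 : (0:ℝ) < S := by linarith
  have hS1 : (1:ℝ) ≤ S := by linarith
  set e : ℝ := 1/s - 1/S with he
  set τ : ℝ := (d:ℝ) * e with hτ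
  have he0 : 0 ≤ e := by
    rcases le_or_gt 0 e with h | h
    · exact h
    · nlinarith
  have hτ0' : 0 ≤ τ := hτ0
  have hR0 : (0:ℝ) < R := by linarith
  set ρ : ℝ := R ^ μ with hρdef
  have hρ1 : (1:ℝ) ≤ ρ := Real.one_le_rpow hR hμ0.le
  have hρ0 : (0:ℝ) < ρ := by linarith
  have hρR : ρ ≤ R := by
    calc ρ ≤ R ^ (1:ℝ) := Real.rpow_le_rpow_of_exponent_le hR hμ1.le
      _ = R := Real.rpow_one R
  set f : (Fin d → ℤ) → ℝ := fun y => gradNorm ψ y ^ s with hf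
  have hf0 : ∀ y, 0 ≤ f y := fun y => Real.rpow_nonneg (Real.sqrt_nonneg _) s

  have fin1 := latBall_finite (0 : Fin d → ℤ) R
  have fin2 := latBall_finite (0 : Fin d → ℤ) (2*R)
  set F1 := fin1.toFinset with hF1
  set F2 := fin2.toFinset with hF2
  set n1 : ℝ := ((latBall (0 : Fin d → ℤ) R).ncard : ℝ) with hn1
  set n2 : ℝ := ((latBall (0 : Fin d → ℤ) (2*R)).ncard : ℝ) with hn2
  set nρ : ℝ := ((latBall (0 : Fin d → ℤ) ρ).ncard : ℝ) with hnρ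
  have hn1pos : 0 < n1 := by
    rw [hn1]; exact_mod_cast ncard_latBall_pos _ (by linarith : (0:ℝ) ≤ R)
  have hn2pos : 0 < n2 := by
    rw [hn2]; exact_mod_cast ncard_latBall_pos _ (by linarith : (0:ℝ) ≤ 2*R)
  have hnρpos : 0 < nρ := by
    rw [hnρ]; exact_mod_cast ncard_latBall_pos _ (by linarith : (0:ℝ) ≤ ρ)
  set T : ℝ := ∑ y ∈ F2, f y with hT
  have hT0 : 0 ≤ T := Finset.sum_nonneg (fun y _ => hf0 y)
  set A : ℝ := setAvg (latBall (0 : Fin d → ℤ) (2*R)) f with hA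
  have hAeq : A = n2⁻¹ * T := setAvg_eq _ fin2 f
  have hA0 : 0 ≤ A := by rw [hAeq]; exact mul_nonneg (inv_nonneg.mpr hn2pos.le) hT0
  -- ball inclusion
  have hsub2 : ∀ x ∈ latBall (0 : Fin d → ℤ) R, latBall x ρ ⊆ latBall (0 : Fin d → ℤ) (2*R) := by
    intro x hx y hy
    have h1 : latNorm (y - x) ≤ ρ := hy
    have h2 : latNorm (x - 0) ≤ R := hx
    have h3 := latNorm_triangle (y - x) (x - 0)
    have h4 : (y - x) + (x - 0) = y - 0 := by abel
    show latNorm (y - 0) ≤ 2*R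
    rw [← h4]
    calc latNorm ((y - x) + (x - 0)) ≤ latNorm (y - x) + latNorm (x - 0) := h3
      _ ≤ ρ + R := add_le_add h1 h2
      _ ≤ 2*R := by linarith
  -- averages over small balls
  have hI0 : ∀ x : Fin d → ℤ, 0 ≤ setAvg (latBall x ρ) f := by
    intro x
    rw [setAvg_eq _ (latBall_finite x ρ) f]
    exact mul_nonneg (inv_nonneg.mpr (Nat.cast_nonneg _))
      (Finset.sum_nonneg (fun y _ => hf0 y))
  have hIbound : ∀ x ∈ latBall (0 : Fin d → ℤ) R, setAvg (latBall x ρ) f ≤ nρ⁻¹ * T := by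
    intro x hx
    rw [setAvg_eq _ (latBall_finite x ρ) f, ncard_latBall_translate]
    apply mul_le_mul_of_nonneg_left _ (inv_nonneg.mpr hnρpos.le)
    apply Finset.sum_le_sum_of_subset_of_nonneg
    · exact Set.Finite.toFinset_subset_toFinset.mpr (hsub2 x hx)
    · intro y _ _; exact hf0 y
  -- double counting
  have hsumI : ∑ x ∈ F1, setAvg (latBall x ρ) f ≤ T := by
    have hswap : ∑ x ∈ F1, ∑ y ∈ (latBall_finite x ρ).toFinset, f y ≤ nρ * T := by
      have hrw : ∀ x ∈ F1, ∑ y ∈ (latBall_finite x ρ).toFinset, f y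
          = ∑ y ∈ F2, if y ∈ latBall x ρ then f y else 0 := by
        intro x hx
        rw [Finset.sum_ite, Finset.sum_const_zero, add_zero]
        apply Finset.sum_congr _ (fun _ _ => rfl)
        ext y
        simp only [Set.Finite.mem_toFinset, Finset.mem_filter]
        have hxB : x ∈ latBall (0 : Fin d → ℤ) R := by
          rw [hF1] at hx; exact (Set.Finite.mem_toFinset _).mp hx
        constructor
        · intro hy; exact ⟨(Set.Finite.mem_toFinset _).mpr (hsub2 x hxB hy), hy⟩
        · intro hy; exact hy.2
      rw [Finset.sum_congr rfl hrw, Finset.sum_comm]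
      have inner : ∀ y ∈ F2, (∑ x ∈ F1, if y ∈ latBall x ρ then f y else 0) ≤ nρ * f y := by
        intro y _
        rw [Finset.sum_ite, Finset.sum_const_zero, add_zero, Finset.sum_const, nsmul_eq_mul]
        apply mul_le_mul_of_nonneg_right _ (hf0 y)
        have hcard : (F1.filter (fun x => y ∈ latBall x ρ)).card ≤ (latBall y ρ).ncard := by
          rw [Set.ncard_eq_toFinset_card _ (latBall_finite y ρ)]
          apply Finset.card_le_card
          intro x hx
          simp only [Finset.mem_filter] at hx
          have : latNorm (y - x) ≤ ρ := hx.2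
          have hneg : latNorm (x - y) ≤ ρ := by
            rw [show x - y = -(y - x) by abel, latNorm_neg]; exact this
          exact (Set.Finite.mem_toFinset _).mpr hneg
        have : ((latBall y ρ).ncard : ℝ) = nρ := by
          rw [hnρ]; exact_mod_cast ncard_latBall_translate y ρ
        rw [← this]
        exact_mod_cast hcard
      calc ∑ y ∈ F2, ∑ x ∈ F1, (if y ∈ latBall x ρ then f y else 0)
          ≤ ∑ y ∈ F2, nρ * f y := Finset.sum_le_sum inner
        _ = nρ * T := by rw [hT, Finset.mul_sum]
    have heq : ∑ x ∈ F1, setAvg (latBall x ρ) f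
        = nρ⁻¹ * ∑ x ∈ F1, ∑ y ∈ (latBall_finite x ρ).toFinset, f y := by
      rw [Finset.mul_sum]
      apply Finset.sum_congr rfl
      intro x _
      rw [setAvg_eq _ (latBall_finite x ρ) f, ncard_latBall_translate]
    rw [heq]
    calc nρ⁻¹ * ∑ x ∈ F1, ∑ y ∈ (latBall_finite x ρ).toFinset, f y
        ≤ nρ⁻¹ * (nρ * T) := mul_le_mul_of_nonneg_left hswap (inv_nonneg.mpr hnρpos.le)
      _ = T := by field_simp
  -- main estimate on the averaged power
  set p : ℝ := S / s with hp
  have hp1 : 1 ≤ p := (one_le_div hs0).mpr hsS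
  set M : ℝ := nρ⁻¹ * T with hM
  have hM0 : 0 ≤ M := mul_nonneg (inv_nonneg.mpr hnρpos.le) hT0
  have havg : setAvg (latBall (0 : Fin d → ℤ) R) (fun x => setAvg (latBall x ρ) f ^ p)
      ≤ M ^ (p - 1) * (n1⁻¹ * T) := by
    rw [setAvg_eq _ fin1 (fun x => setAvg (latBall x ρ) f ^ p)]
    have h1 : ∑ x ∈ F1, setAvg (latBall x ρ) f ^ p
        ≤ ∑ x ∈ F1, M ^ (p - 1) * setAvg (latBall x ρ) f := by
      apply Finset.sum_le_sum
      intro x hx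
      have hxB : x ∈ latBall (0 : Fin d → ℤ) R := (Set.Finite.mem_toFinset _).mp hx
      exact rpow_le_mul (hI0 x) (hIbound x hxB) hp1
    have h2 : ∑ x ∈ F1, M ^ (p - 1) * setAvg (latBall x ρ) f
        = M ^ (p - 1) * ∑ x ∈ F1, setAvg (latBall x ρ) f := by rw [Finset.mul_sum]
    calc n1⁻¹ * ∑ x ∈ F1, setAvg (latBall x ρ) f ^ p
        ≤ n1⁻¹ * (M ^ (p - 1) * ∑ x ∈ F1, setAvg (latBall x ρ) f) := by
          apply mul_le_mul_of_nonneg_left _ (inv_nonneg.mpr hn1pos.le)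
          rw [← h2]; exact h1
      _ ≤ n1⁻¹ * (M ^ (p - 1) * T) := by
          apply mul_le_mul_of_nonneg_left _ (inv_nonneg.mpr hn1pos.le)
          exact mul_le_mul_of_nonneg_left hsumI (Real.rpow_nonneg hM0 _)
      _ = M ^ (p - 1) * (n1⁻¹ * T) := by ring
  -- conclusion
  have hg0 : 0 ≤ setAvg (latBall (0:Fin d→ℤ) R) (fun x => setAvg (latBall x ρ) f ^ p) := by
    rw [setAvg_eq _ fin1]
    exact mul_nonneg (inv_nonneg.mpr (Nat.cast_nonneg _))
      (Finset.sum_nonneg fun x _ => Real.rpow_nonneg (hI0 x) p)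
  rcases eq_or_lt_of_le hA0 with hAz | hApos
  · -- degenerate case A = 0
    have hA' : A = 0 := hAz.symm
    have hTz : T = 0 := by
      have h1 : n2⁻¹ * T = 0 := by rw [← hAeq, hA']
      rcases mul_eq_zero.mp h1 with h | h
      · exact absurd h (ne_of_gt (inv_pos.mpr hn2pos))
      · exact h
    have hb : M ^ (p-1) * (n1⁻¹ * T) = 0 := by rw [hTz]; ring
    have havg0 : setAvg (latBall (0:Fin d→ℤ) R) (fun x => setAvg (latBall x ρ) f ^ p) = 0 :=
      le_antisymm (hb ▸ havg) hg0
    rw [havg0, hA', Real.zero_rpow (one_div_ne_zero hS0.ne'),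
      Real.zero_rpow (one_div_ne_zero hs0.ne'), mul_zero]
  · -- main case A > 0
    have hT_eq : T = n2 * A := by rw [hAeq]; field_simp
    set K1 : ℝ := n2 / nρ with hK1
    set K2 : ℝ := n2 / n1 with hK2
    have hK1pos : 0 < K1 := div_pos hn2pos hnρpos
    have hK2pos : 0 < K2 := div_pos hn2pos hn1pos
    have hMeq : M = K1 * A := by rw [hM, hT_eq, hK1]; field_simp
    have hNT : n1⁻¹ * T = K2 * A := by rw [hT_eq, hK2, div_eq_mul_inv]; ring
    have hKA0 : 0 ≤ K1 * A := (mul_pos hK1pos hApos).le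
    have hstep1 : setAvg (latBall (0:Fin d→ℤ) R) (fun x => setAvg (latBall x ρ) f ^ p) ^ (1/S)
        ≤ ((K1*A)^(p-1) * (K2*A))^(1/S) := by
      apply Real.rpow_le_rpow hg0 _ (by positivity)
      calc setAvg (latBall (0:Fin d→ℤ) R) (fun x => setAvg (latBall x ρ) f ^ p)
          ≤ M ^ (p - 1) * (n1⁻¹ * T) := havg
        _ = (K1*A)^(p-1) * (K2*A) := by rw [hMeq, hNT]
    have hpe : (p - 1) * (1/S) = e := by
      rw [hp, he]
      field_simp
    have hsum_exp : e + 1/S = 1/s := by rw [he]; ring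
    have halg : ((K1*A)^(p-1) * (K2*A))^(1/S) = K1^e * K2^(1/S) * (A^e * A^(1/S)) := by
      rw [Real.mul_rpow (Real.rpow_nonneg hKA0 _) (mul_nonneg hK2pos.le hApos.le),
        ← Real.rpow_mul hKA0, hpe, Real.mul_rpow hK1pos.le hApos.le,
        Real.mul_rpow hK2pos.le hApos.le]
      ring
    have hAfin : A^e * A^(1/S) = A^(1/s) := by
      rw [← Real.rpow_add hApos, hsum_exp]
    -- cardinality ratio bounds
    have hsd0 : (0:ℝ) < Real.sqrt d := by linarith
    have hRμpos : (0:ℝ) < R ^ (1 - μ) := Real.rpow_pos_of_pos hR0 _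
    have hratio : R / ρ = R ^ (1 - μ) := by
      rw [Real.rpow_sub hR0, Real.rpow_one, hρdef]
    have hn2le : n2 ≤ (10*R)^d := by
      have h1 := ncard_latBall_le (0 : Fin d → ℤ) (by linarith : 1 ≤ 2*R)
      calc n2 ≤ (5*(2*R))^d := by rw [hn2]; exact h1
        _ = (10*R)^d := by ring_nf
    have hnρge : (ρ / Real.sqrt d)^d ≤ nρ := by
      rw [hnρ]; exact le_ncard_latBall _ hρ0.le hd
    have hn1ge : (R / Real.sqrt d)^d ≤ n1 := by
      rw [hn1]; exact le_ncard_latBall _ hR0.le hd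
    have hρsdpos : (0:ℝ) < (ρ / Real.sqrt d)^d := by positivity
    have hRsdpos : (0:ℝ) < (R / Real.sqrt d)^d := by positivity
    have hK1le : K1 ≤ (c0 * R^(1-μ))^d := by
      rw [hK1]
      calc n2/nρ ≤ (10*R)^d / (ρ/Real.sqrt d)^d :=
            div_le_div₀ (by positivity) hn2le hρsdpos hnρge
        _ = ((10*R) / (ρ/Real.sqrt d))^d := (div_pow _ _ _).symm
        _ = (c0 * R^(1-μ))^d := by
            congr 1
            rw [hc0, ← hratio]
            field_simp
    have hK2le : K2 ≤ c0^d := by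
      rw [hK2]
      calc n2/n1 ≤ (10*R)^d / (R/Real.sqrt d)^d :=
            div_le_div₀ (by positivity) hn2le hRsdpos hn1ge
        _ = ((10*R)/(R/Real.sqrt d))^d := (div_pow _ _ _).symm
        _ = c0^d := by
            congr 1
            rw [hc0]
            field_simp
    have hK1e : K1^e ≤ c0 * R^(τ*(1-μ)) := by
      have hb0 : (0:ℝ) ≤ c0 * R^(1-μ) := by positivity
      calc K1^e ≤ ((c0 * R^(1-μ))^d)^e := Real.rpow_le_rpow hK1pos.le hK1le he0
        _ = (c0*R^(1-μ))^((d:ℝ)*e) := by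
            rw [← Real.rpow_natCast (c0*R^(1-μ)) d, ← Real.rpow_mul hb0]
        _ = c0^τ * (R^(1-μ))^τ := by
            rw [← hτ, Real.mul_rpow hc00.le hRμpos.le]
        _ ≤ c0 * R^(τ*(1-μ)) := by
            have h1 : c0^τ ≤ c0 := by
              calc c0^τ ≤ c0^(1:ℝ) := Real.rpow_le_rpow_of_exponent_le hc01 hτ1
                _ = c0 := Real.rpow_one c0
            have h2 : (R^(1-μ))^τ = R^(τ*(1-μ)) := by
              rw [← Real.rpow_mul hR0.le, mul_comm]
            rw [h2]
            exact mul_le_mul_of_nonneg_right h1 (Real.rpow_nonneg hR0.le _)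
    have hK2S : K2^(1/S) ≤ (c0:ℝ)^d := by
      have h01 : 1 ≤ K2 := by
        rw [hK2, le_div_iff₀ hn1pos, one_mul, hn1, hn2]
        have h : (latBall (0:Fin d→ℤ) R).ncard ≤ (latBall (0:Fin d→ℤ) (2*R)).ncard :=
          Set.ncard_le_ncard (latBall_mono _ (by linarith)) fin2
        exact_mod_cast h
      calc K2^(1/S) ≤ K2^(1:ℝ) :=
            Real.rpow_le_rpow_of_exponent_le h01 (by rw [div_le_one hS0]; linarith)
        _ = K2 := Real.rpow_one _
        _ ≤ c0^d := hK2le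
    calc setAvg (latBall (0:Fin d→ℤ) R) (fun x => setAvg (latBall x ρ) f ^ p) ^ (1/S)
        ≤ ((K1*A)^(p-1) * (K2*A))^(1/S) := hstep1
      _ = K1^e * K2^(1/S) * (A^e * A^(1/S)) := halg
      _ = K1^e * K2^(1/S) * A^(1/s) := by rw [hAfin]
      _ ≤ (c0 * R^(τ*(1-μ))) * c0^d * A^(1/s) := by
          apply mul_le_mul_of_nonneg_right _ (Real.rpow_nonneg hApos.le _)
          exact mul_le_mul hK1e hK2S (Real.rpow_nonneg hK2pos.le _)
            (mul_nonneg hc00.le (Real.rpow_nonneg hR0.le _))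
      _ = c0 * c0^d * R^(τ*(1-μ)) * A^(1/s) := by ring
end
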